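/- arXiv:1110.2701 — 4 statements merged into one kernel-verified Lean document; each statement's English description precedes it below -/
import Mathlib

section
/- For Z-segments Δ = (a, b) and Δ' = (a', b'), the following are equivalent: (i) from the concatenation of the list (a, a+1, …, b) followed by the list (a', a'+1, …, b') one can extract a sublist which is a list of consecutive integers (each term equal to the previous one plus 1) of length strictly greater than both b − a + 1 and b' − a' + 1; (ii) a < a', a' ≤ b + 1 and b < b'. (This identifies the paper's Definition 3.2 of 'Δ precedes Δ'' with its arithmetic characterization on an infinite cuspidal line.) -/
/-!
If a chain `s` of consecutive integers is extracted from `Δ ++ Δ'`, it splits as `s₁ ++ s₂` with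
`s₁` inside `Δ = [a, b]` and `s₂` inside `Δ' = [a', b']`; being longer than either segment, it
meets both. Write `s` as `u, …, x, x + 1, …, v`. Its length `v - u + 1` exceeds `b - a + 1` with
`u ≥ a`, so `v > b`, and exceeds `b' - a' + 1` with `v ≤ b'`, so `u < a'`; finally
`a' ≤ x + 1 ≤ b + 1`. Conversely `[a, b']` itself is such a chain: it is `[a, a' - 1] ++ [a', b']`
with `[a, a' - 1]` a prefix of `Δ`.
-/

/-- The list `(a, a+1, …, b)` of consecutive integers associated to a
Z-segment `(a, b)`. -/
def zlist (a b : ℤ) : List ℤ :=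
  (List.range (b - a + 1).toNat).map fun k => a + k

theorem List.IsChain.getLast_add_one_eq_head_add_length {α : Type*} [AddCommMonoidWithOne α] :
    ∀ {s : List α} (hs : s ≠ []), s.IsChain (fun x y => y = x + 1) →
      s.getLast hs + 1 = s.head hs + s.length
  | [_], _, _ => by simp
  | x :: y :: t, _, hc => by
    obtain ⟨rfl, hc⟩ := List.isChain_cons_cons.mp hc
    rw [List.getLast_cons_cons, getLast_add_one_eq_head_add_length (List.cons_ne_nil _ t) hc]
    simp only [List.head_cons, List.length_cons, Nat.cast_add, Nat.cast_one]
    abel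

-- `zlist` elaborates through the list monad, coercing `List.range _` to `List ℤ` elementwise.
theorem zlist_eq_map (a b : ℤ) :
    zlist a b = (List.range (b - a + 1).toNat).map (fun k : ℕ => a + (k : ℤ)) := by
  simp only [zlist, List.pure_def, List.bind_eq_flatMap, ← List.map_eq_flatMap, List.map_map]
  rfl

@[simp]
theorem length_zlist (a b : ℤ) : (zlist a b).length = (b - a + 1).toNat := by
  simp [zlist_eq_map]

theorem mem_zlist {a b z : ℤ} : z ∈ zlist a b ↔ a ≤ z ∧ z ≤ b := by
  simp only [zlist_eq_map, List.mem_map, List.mem_range]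
  constructor
  · rintro ⟨k, hk, rfl⟩
    omega
  · rintro ⟨h₁, h₂⟩
    exact ⟨(z - a).toNat, by omega, by omega⟩

theorem isChain_zlist (a b : ℤ) : (zlist a b).IsChain (fun x y => y = x + 1) := by
  rw [zlist_eq_map, List.isChain_map, List.isChain_range]
  intro m _
  push_cast
  ring

theorem zlist_append_zlist {a b c : ℤ} (hac : a ≤ c + 1) (hcb : c ≤ b) :
    zlist a c ++ zlist (c + 1) b = zlist a b := by
  have hlen : (b - a + 1).toNat = (c - a + 1).toNat + (b - (c + 1) + 1).toNat := by omega
  rw [zlist_eq_map, zlist_eq_map, zlist_eq_map, hlen, List.range_add, List.map_append,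
    List.map_map]
  congr 1
  refine List.map_congr_left fun k _ => ?_
  simp only [Function.comp_apply]
  push_cast
  rw [Int.toNat_of_nonneg (by omega)]
  ring

theorem length_le_of_sublist_zlist {s : List ℤ} {a b : ℤ} (hs : s.Sublist (zlist a b))
    (hne : s ≠ []) : (s.length : ℤ) ≤ b - a + 1 := by
  have hab : a ≤ b := by
    obtain ⟨h₁, h₂⟩ := mem_zlist.mp (hs.subset (s.head_mem hne))
    exact h₁.trans h₂
  have := hs.length_le
  rw [length_zlist] at this
  omega

theorem zlist_sublist_zlist_append_zlist {a b a' b' : ℤ} (h₁ : a < a') (h₂ : a' ≤ b + 1)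
    (h₃ : b < b') : (zlist a b').Sublist (zlist a b ++ zlist a' b') := by
  have split_b' := zlist_append_zlist (a := a) (c := a' - 1) (b := b') (by omega) (by omega)
  have split_b := zlist_append_zlist (a := a) (c := a' - 1) (b := b) (by omega) (by omega)
  rw [sub_add_cancel] at split_b' split_b
  rw [← split_b', ← split_b]
  exact (List.sublist_append_left _ _).append (List.Sublist.refl _)

theorem lt_and_le_and_lt_of_isChain_sublist_zlist_append {s : List ℤ} {a b a' b' : ℤ}
    (hab : a ≤ b) (hs : s.Sublist (zlist a b ++ zlist a' b'))
    (hc : s.IsChain (fun x y => y = x + 1))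
    (hlong : (b - a + 1 : ℤ) < s.length) (hlong' : (b' - a' + 1 : ℤ) < s.length) :
    a < a' ∧ a' ≤ b + 1 ∧ b < b' := by
  obtain ⟨s₁, s₂, rfl, hs₁, hs₂⟩ := List.sublist_append_iff.mp hs
  have hne : s₁ ++ s₂ ≠ [] := by
    rintro h
    rw [h, List.length_nil] at hlong
    omega
  have hne₂ : s₂ ≠ [] := by
    rintro rfl
    rw [List.append_nil] at hne hlong
    exact absurd (length_le_of_sublist_zlist hs₁ hne) hlong.not_ge
  have hne₁ : s₁ ≠ [] := by
    rintro rfl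
    rw [List.nil_append] at hne hlong'
    exact absurd (length_le_of_sublist_zlist hs₂ hne) hlong'.not_ge
  obtain ⟨hc₁, hc₂, hjoin⟩ := List.isChain_append.mp hc
  have hx := hjoin _ (List.getLast?_eq_some_getLast hne₁) _ (List.head?_eq_some_head hne₂)
  have hu := mem_zlist.mp (hs₁.subset (s₁.head_mem hne₁))
  have hx₁ := mem_zlist.mp (hs₁.subset (s₁.getLast_mem hne₁))
  have hx₂ := mem_zlist.mp (hs₂.subset (s₂.head_mem hne₂))
  have hv := mem_zlist.mp (hs₂.subset (s₂.getLast_mem hne₂))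
  have hlen₁ := hc₁.getLast_add_one_eq_head_add_length hne₁
  have hlen₂ := hc₂.getLast_add_one_eq_head_add_length hne₂
  rw [List.length_append, Nat.cast_add] at hlong hlong'
  omega

theorem zprecedes_iff_general (a b a' b' : ℤ) (hab : a ≤ b) :
    (∃ s : List ℤ, s.Sublist (zlist a b ++ zlist a' b') ∧
      s.Chain' (fun x y => y = x + 1) ∧
      (b - a + 1 : ℤ) < s.length ∧ (b' - a' + 1 : ℤ) < s.length) ↔
    (a < a' ∧ a' ≤ b + 1 ∧ b < b') := by
  constructor
  · rintro ⟨s, hs, hc, hlong, hlong'⟩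
    exact lt_and_le_and_lt_of_isChain_sublist_zlist_append hab hs hc hlong hlong'
  · rintro ⟨h₁, h₂, h₃⟩
    refine ⟨zlist a b', zlist_sublist_zlist_append_zlist h₁ h₂ h₃, isChain_zlist a b', ?_, ?_⟩ <;>
      · rw [length_zlist]
        omega

/-- For Z-segments `Δ = (a, b)` and `Δ' = (a', b')`, one can
extract from the concatenation of the list of `Δ` followed by the list of `Δ'`
a sublist of consecutive integers of length strictly greater than the lengths
of both segments if and only if `a < a'`, `a' ≤ b + 1` and `b < b'`. -/
theorem zprecedes_iff (a b a' b' : ℤ) (hab : a ≤ b) (hab' : a' ≤ b') :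
    (∃ s : List ℤ, s.Sublist (zlist a b ++ zlist a' b') ∧
      s.Chain' (fun x y => y = x + 1) ∧
      (b - a + 1 : ℤ) < s.length ∧ (b' - a' + 1 : ℤ) < s.length) ↔
    (a < a' ∧ a' ≤ b + 1 ∧ b < b') :=
  zprecedes_iff_general a b a' b' hab
end

section
/- Let e ≥ 2 and let (a, b), (a', b') be pairs of integers with 0 ≤ a ≤ b ≤ e − 2 and 0 ≤ a' ≤ b' ≤ e − 2. Let Δ̄ and Δ̄' be the mod-e segments (a mod e, b − a + 1) and (a' mod e, b' − a' + 1). Then Δ̄ precedes Δ̄' if and only if a < a', a' ≤ b + 1 and b < b'. (This is the combinatorial core of §6.2.4 of the paper: for segments whose endpoints lie in a window of size e − 1, precedence modulo e coincides with precedence over Z.) -/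
/-- The list `(a, a+1, …, a+l−1)` of classes of the mod-`e` segment `(a, l)`. -/
def mlist (e : ℕ) (a : ZMod e) (l : ℕ) : List (ZMod e) :=
  (List.range l).map fun k => a + (k : ZMod e)

/-- A mod-`e` segment `Δ` precedes `Δ'` if some sublist of the concatenation of
the list of `Δ` followed by the list of `Δ'` is a run of length strictly
greater than the lengths of both segments. -/
def mprec (e : ℕ) (Δ Δ' : ZMod e × ℕ) : Prop :=
  ∃ s : List (ZMod e), s.Sublist (mlist e Δ.1 Δ.2 ++ mlist e Δ'.1 Δ'.2) ∧
    s.Chain' (fun x y => y = x + 1) ∧ Δ.2 < s.length ∧ Δ'.2 < s.length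

/-! A run inside a segment of length at most `e` cannot wrap around, so it is a contiguous block
`a + i, …, a + i + k − 1` of that segment. A run witnessing that `Δ` precedes `Δ'` therefore
consists of a nonempty block of `Δ` ending at some `a + i + k − 1` followed by a nonempty block
of `Δ'` starting at `a + i + k` modulo `e`. In the window both of these are natural numbers below
`e`, so the junction is an equality of integers, and the length conditions become `a < a'` and
`b < b'`. Conversely, if `Δ` precedes `Δ'` over `ℤ`, the segment from `a` to `b'` is the
required run. -/

theorem mlist_eq_map (e : ℕ) (c : ZMod e) (l : ℕ) :
    mlist e c l = (List.range l).map fun k : ℕ => c + (k : ZMod e) := by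
  simp [mlist, ← List.map_eq_flatMap]

section mlist

variable {e : ℕ} (c : ZMod e)

@[simp]
theorem length_mlist (l : ℕ) : (mlist e c l).length = l := by
  simp [mlist_eq_map]

@[simp]
theorem mlist_zero : mlist e c 0 = [] := by
  simp [mlist_eq_map]

@[simp]
theorem mlist_one : mlist e c 1 = [c] := by
  simp [mlist_eq_map]

theorem mlist_add (m n : ℕ) : mlist e c (m + n) = mlist e c m ++ mlist e (c + m) n := by
  simp only [mlist_eq_map, List.range_add, List.map_append, List.map_map]
  congr 1
  refine List.map_congr_left fun k _ => ?_
  simp only [Function.comp_apply, Nat.cast_add, add_assoc]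

theorem mlist_succ_eq_cons (l : ℕ) : mlist e c (l + 1) = c :: mlist e (c + 1) l := by
  rw [add_comm, mlist_add, mlist_one, Nat.cast_one, List.singleton_append]

theorem mlist_succ (l : ℕ) : mlist e c (l + 1) = mlist e c l ++ [c + l] := by
  rw [mlist_add, mlist_one]

theorem isChain_mlist (l : ℕ) : (mlist e c l).IsChain fun x y => y = x + 1 := by
  simp [mlist_eq_map, List.isChain_map, List.isChain_range, add_assoc]

theorem mlist_infix {d m n : ℕ} (h : d + m ≤ n) : mlist e (c + d) m <:+: mlist e c n :=
  ⟨mlist e c d, mlist e (c + (d + m : ℕ)) (n - (d + m)), by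
    rw [← mlist_add, ← mlist_add, Nat.add_sub_cancel' h]⟩

end mlist

theorem natCast_inj_of_lt {e a b : ℕ} (ha : a < e) (hb : b < e)
    (h : (a : ZMod e) = b) : a = b := by
  rwa [ZMod.natCast_eq_natCast_iff', Nat.mod_eq_of_lt ha, Nat.mod_eq_of_lt hb] at h

theorem exists_eq_mlist_of_sublist {e l : ℕ} {c : ZMod e} {s : List (ZMod e)} (hl : l ≤ e)
    (hs : s.Sublist (mlist e c l)) (hrun : s.IsChain fun x y => y = x + 1) :
    ∃ i k, i + k ≤ l ∧ s = mlist e (c + i) k := by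
  induction l generalizing c s with
  | zero => exact ⟨0, 0, le_rfl, by simpa using hs⟩
  | succ n ih =>
    rw [mlist_succ_eq_cons] at hs
    cases hs with
    | cons _ hs =>
      obtain ⟨i, k, hik, rfl⟩ := ih (by omega) hs hrun
      exact ⟨i + 1, k, by omega, by push_cast; ring_nf⟩
    | @cons_cons t _ _ ht =>
      obtain ⟨i, k, hik, rfl⟩ := ih (by omega) ht hrun.tail
      rcases k with _ | k
      · exact ⟨0, 1, by omega, by simp⟩
      · -- the run condition at `c` forces the block to start right after `c`
        rw [mlist_succ_eq_cons, List.isChain_cons_cons] at hrun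
        have hi : (i : ZMod e) = (0 : ℕ) := by simpa using hrun.1
        obtain rfl : i = 0 := natCast_inj_of_lt (by omega) (by omega) hi
        exact ⟨0, k + 2, by omega, by simp [mlist_succ_eq_cons]⟩

theorem eq_add_of_isChain_mlist_append {e m n : ℕ} {x y : ZMod e}
    (h : (mlist e x (m + 1) ++ mlist e y (n + 1)).IsChain fun a b => b = a + 1) :
    y = x + (m + 1 : ℕ) := by
  rw [mlist_succ, mlist_succ_eq_cons, List.append_assoc, List.singleton_append,
    List.isChain_append_cons_cons] at h
  rw [h.2.1]
  push_cast
  ring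

theorem mprec_natCast_iff {e a l a' l' : ℕ} (h : a + l < e) (h' : a' + l' ≤ e) :
    mprec e ((a : ZMod e), l) ((a' : ZMod e), l') ↔ a < a' ∧ a' ≤ a + l ∧ a + l < a' + l' := by
  constructor
  · rintro ⟨s, hs, hrun, hl, hl'⟩
    dsimp only at hs hl hl'
    obtain ⟨s₁, s₂, rfl, h₁, h₂⟩ := List.sublist_append_iff.mp hs
    obtain ⟨i, k, hik, rfl⟩ := exists_eq_mlist_of_sublist (by omega) h₁ hrun.left_of_append
    obtain ⟨j, k', hjk, rfl⟩ := exists_eq_mlist_of_sublist (by omega) h₂ hrun.right_of_append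
    simp only [List.length_append, length_mlist] at hl hl'
    obtain ⟨m, rfl⟩ : ∃ m, k = m + 1 := ⟨k - 1, by omega⟩
    obtain ⟨n, rfl⟩ : ∃ n, k' = n + 1 := ⟨k' - 1, by omega⟩
    have hjunction : ((a' + j : ℕ) : ZMod e) = (a + i + (m + 1) : ℕ) :=
      mod_cast eq_add_of_isChain_mlist_append hrun
    have := natCast_inj_of_lt (by omega) (by omega) hjunction
    omega
  · rintro ⟨hlt, hle, hlt'⟩
    refine ⟨mlist e a (l + (a' + l' - (a + l))), ?_, isChain_mlist _ _, by simp; omega,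
      by simp; omega⟩
    have hstart : (a : ZMod e) + l = a' + (a + l - a' : ℕ) := by
      rw [← Nat.cast_add, ← Nat.cast_add, Nat.add_sub_cancel' hle]
    rw [mlist_add, hstart]
    exact (List.Sublist.refl _).append (mlist_infix _ (by omega)).sublist

theorem mprec_iff_of_window_general (e : ℕ) (a b a' b' : ℤ)
    (ha : 0 ≤ a) (hab : a ≤ b) (hb : b ≤ (e : ℤ) - 2)
    (ha' : 0 ≤ a') (hab' : a' ≤ b') (hb' : b' ≤ (e : ℤ) - 2) :
    mprec e ((a : ZMod e), (b - a + 1).toNat) ((a' : ZMod e), (b' - a' + 1).toNat) ↔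
      (a < a' ∧ a' ≤ b + 1 ∧ b < b') := by
  lift a to ℕ using ha
  lift a' to ℕ using ha'
  rw [Int.cast_natCast, Int.cast_natCast, mprec_natCast_iff (by omega) (by omega)]
  omega

/-- For segments whose endpoints lie in the window
`{0, …, e − 2}`, precedence of the reductions modulo `e` coincides with the
arithmetic precedence over `ℤ`. -/
theorem mprec_iff_of_window (e : ℕ) (he : 2 ≤ e) (a b a' b' : ℤ)
    (ha : 0 ≤ a) (hab : a ≤ b) (hb : b ≤ (e : ℤ) - 2)
    (ha' : 0 ≤ a') (hab' : a' ≤ b') (hb' : b' ≤ (e : ℤ) - 2) :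
    mprec e ((a : ZMod e), (b - a + 1).toNat) ((a' : ZMod e), (b' - a' + 1).toNat) ↔
      (a < a' ∧ a' ≤ b + 1 ∧ b < b') :=
  mprec_iff_of_window_general e a b a' b' ha hab hb ha' hab' hb'
end

section
/- Let e ≥ 1 and let m be a nonempty banal finite multiset of mod-e segments. Then m admits an enumeration (Δ_1, …, Δ_r) together with a partition of the index set {1, …, r} into consecutive blocks I_1, …, I_u (in this order) such that: (i) any two segments whose indices lie in the same block I_k have the same final class, denoted c_k; (ii) for all indices i < j, Δ_i does not precede Δ_j; (iii) for all k < k' and every index j ∈ I_{k'}, the class c_k does not belong to the support of Δ_j. (This is the combinatorial arrangement (5.1)–(5.3) constructed in §5.3 of the paper.) -/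
/-- The final class `a + l − 1` of the mod-`e` segment `(a, l)`. -/
def finalClass (e : ℕ) (Δ : ZMod e × ℕ) : ZMod e := Δ.1 + ((Δ.2 - 1 : ℕ) : ZMod e)

theorem List.exists_perm_flatten_fiber_blocks {α β : Type*} [LinearOrder β] (f : α → β)
    (L : List α) :
    ∃ Bs : List (β × List α), (Bs.map Prod.snd).flatten.Perm L ∧ (∀ p ∈ Bs, p.2 ≠ []) ∧
      (∀ p ∈ Bs, ∀ x ∈ p.2, f x = p.1) ∧ Bs.Pairwise fun p q => q.1 < p.1 := by
  classical
  set keys := (L.map f).toFinset.sort (· ≥ ·)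
  refine ⟨keys.map fun k => (k, L.filter (f · = k)), ?_, ?_, ?_, ?_⟩
  · have hsum : ∀ g : β → ℕ, (keys.map g).sum = ∑ k ∈ (L.map f).toFinset, g k := fun g => by
      rw [Finset.sum_eq_multiset_sum, ← Finset.sort_eq _ (· ≥ ·), Multiset.map_coe,
        Multiset.sum_coe]
    refine List.perm_iff_count.mpr fun x => ?_
    simp only [List.count_flatten, List.map_map, Function.comp_def, hsum]
    rw [Finset.sum_eq_single (f x), List.count_filter (by simp)]
    · intro k _ hk
      exact List.count_eq_zero.mpr fun h => hk (of_decide_eq_true (List.mem_filter.mp h).2).symm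
    · intro hfx
      exact List.count_eq_zero.mpr fun h =>
        hfx (List.mem_toFinset.mpr (List.mem_map_of_mem (List.mem_of_mem_filter h)))
  · simp only [List.mem_map, forall_exists_index, and_imp]
    rintro _ k hk rfl
    obtain ⟨x, hx, rfl⟩ := List.mem_map.mp (List.mem_toFinset.mp ((Finset.mem_sort _).mp hk))
    exact List.ne_nil_of_mem (List.mem_filter.mpr ⟨hx, by simp⟩)
  · simp only [List.mem_map, forall_exists_index, and_imp]
    rintro _ k _ rfl x hx
    exact of_decide_eq_true (List.mem_filter.mp hx).2
  · rw [List.pairwise_map]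
    exact ((Finset.pairwise_sort _ _).and (Finset.sort_nodup _ _)).imp fun h =>
      lt_of_le_of_ne h.1 h.2.symm

theorem List.pairwise_flatten_of_fiber_blocks {α β : Type*} [Preorder β] {f : α → β}
    {Bs : List (β × List α)} (hfib : ∀ p ∈ Bs, ∀ x ∈ p.2, f x = p.1)
    (hdec : Bs.Pairwise fun p q => q.1 < p.1) :
    (Bs.map Prod.snd).flatten.Pairwise fun x y => f y ≤ f x := by
  rw [List.pairwise_flatten, List.pairwise_map]
  refine ⟨?_, hdec.imp_of_mem fun hp hq hlt x hx y hy => ?_⟩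
  · intro l hl
    obtain ⟨p, hp, rfl⟩ := List.mem_map.mp hl
    exact List.pairwise_of_forall_mem_list fun x hx y hy =>
      ((hfib p hp y hy).trans (hfib p hp x hx).symm).le
  · rw [hfib _ hq y hy, hfib _ hp x hx]
    exact hlt.le

namespace ModSegment

variable {e : ℕ}

theorem mem_mlist {a x : ZMod e} {l : ℕ} : x ∈ mlist e a l ↔ ∃ k < l, a + k = x := by
  simp [mlist]

theorem length_mlist (a : ZMod e) (l : ℕ) : (mlist e a l).length = l := by
  simp [mlist]

-- `mlist` elaborates `List.range l` through the list-monad coercion `List ℕ → List (ZMod e)`.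
theorem mlist_eq_map_range (a : ZMod e) (l : ℕ) :
    mlist e a l = (List.range l).map fun k : ℕ => a + k := by
  simp only [mlist, bind_pure_comp, List.map_eq_map, List.map_map]
  rfl

theorem mlist_succ (a : ZMod e) (l : ℕ) : mlist e a (l + 1) = a :: mlist e (a + 1) l := by
  simp only [mlist_eq_map_range, List.range_succ_eq_map, List.map_cons, List.map_map]
  congr 1
  · simp
  · refine List.map_congr_left fun k _ => ?_
    simp only [Function.comp_apply, Nat.cast_succ]
    ring

theorem eq_mlist_of_isChain {x : ZMod e} {s : List (ZMod e)}
    (h : (x :: s).IsChain fun a b => b = a + 1) : x :: s = mlist e x (s.length + 1) := by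
  induction s generalizing x with
  | nil => simp [mlist]
  | cons y s ih =>
    obtain ⟨rfl, h⟩ := List.isChain_cons_cons.mp h
    rw [List.length_cons, mlist_succ, ← ih h]

def offset (c x : ZMod e) : ℕ := (x - c).val

variable [NeZero e] (c : ZMod e)

theorem natCast_offset (x : ZMod e) : (offset c x : ZMod e) = x - c := by
  simp [offset]

theorem offset_add_natCast {a : ZMod e} {l k : ℕ} (hc : c ∉ mlist e a l) (hk : k < l) :
    offset c (a + k) = offset c a + k := by
  -- otherwise the segment would wrap around the circle through `c`
  have hlt : offset c a + k < e := by
    by_contra! hge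
    have : offset c a < e := ZMod.val_lt _
    refine hc (mem_mlist.mpr ⟨e - offset c a, by omega, ?_⟩)
    rw [Nat.cast_sub this.le, ZMod.natCast_self, natCast_offset]
    ring
  rw [← ZMod.val_natCast_of_lt hlt, Nat.cast_add, natCast_offset, offset]
  ring_nf

theorem offset_finalClass {Δ : ZMod e × ℕ} (hc : c ∉ mlist e Δ.1 Δ.2) (hl : 0 < Δ.2) :
    offset c (finalClass e Δ) = offset c Δ.1 + (Δ.2 - 1) :=
  offset_add_natCast c hc (by omega)

theorem exists_offset_eq_of_mem_mlist {Δ : ZMod e × ℕ} {y : ZMod e}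
    (hc : c ∉ mlist e Δ.1 Δ.2) (hy : y ∈ mlist e Δ.1 Δ.2) :
    ∃ k < Δ.2, offset c y = offset c Δ.1 + k := by
  obtain ⟨k, hk, rfl⟩ := mem_mlist.mp hy
  exact ⟨k, hk, offset_add_natCast c hc hk⟩

theorem offset_le_offset_finalClass {Δ : ZMod e × ℕ} {y : ZMod e}
    (hc : c ∉ mlist e Δ.1 Δ.2) (hy : y ∈ mlist e Δ.1 Δ.2) :
    offset c y ≤ offset c (finalClass e Δ) := by
  obtain ⟨k, hk, hy⟩ := exists_offset_eq_of_mem_mlist c hc hy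
  rw [hy, offset_finalClass c hc (by omega)]
  omega

theorem not_mprec_of_offset_finalClass_le {Δ Δ' : ZMod e × ℕ} (hΔ : c ∉ mlist e Δ.1 Δ.2)
    (hΔ' : c ∉ mlist e Δ'.1 Δ'.2)
    (hle : offset c (finalClass e Δ') ≤ offset c (finalClass e Δ)) : ¬ mprec e Δ Δ' := by
  rintro ⟨s, hsub, hrun, hlen, hlen'⟩
  obtain ⟨_ | ⟨x, t⟩, s₂, rfl, h₁, h₂⟩ := List.sublist_append_iff.mp hsub
  · have hs₂ := h₂.length_le
    simp only [length_mlist] at hs₂ hlen'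
    omega
  set n := (x :: t ++ s₂).length
  have hrun' : x :: t ++ s₂ = mlist e x n := eq_mlist_of_isChain hrun
  have hcs : c ∉ mlist e x n := by
    rw [← hrun']
    intro hc
    rcases List.mem_append.mp (hsub.subset hc) with h | h
    exacts [hΔ h, hΔ' h]
  have hlast : x + ((n - 1 : ℕ) : ZMod e) ∈ mlist e x n :=
    mem_mlist.mpr ⟨n - 1, by omega, rfl⟩
  have hlast_le : offset c (x + ((n - 1 : ℕ) : ZMod e)) ≤ offset c (finalClass e Δ) := by
    rw [← hrun'] at hlast
    rcases List.mem_append.mp (hsub.subset hlast) with h | h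
    · exact offset_le_offset_finalClass c hΔ h
    · exact (offset_le_offset_finalClass c hΔ' h).trans hle
  obtain ⟨k, hk, hx⟩ := exists_offset_eq_of_mem_mlist c hΔ (h₁.subset List.mem_cons_self)
  rw [offset_add_natCast c hcs (by omega : n - 1 < n), hx, offset_finalClass c hΔ (by omega)]
    at hlast_le
  omega

end ModSegment

theorem exists_arranged_blocks_general (e : ℕ) (he : 1 ≤ e) (m : Multiset (ZMod e × ℕ))
    (hban : ∃ c : ZMod e, ∀ Δ ∈ m, c ∉ mlist e Δ.1 Δ.2) :
    ∃ Ls : List (ZMod e × List (ZMod e × ℕ)),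
      (((Ls.map Prod.snd).flatten : List (ZMod e × ℕ)) : Multiset (ZMod e × ℕ)) = m ∧
      (∀ p ∈ Ls, p.2 ≠ []) ∧
      (∀ p ∈ Ls, ∀ Δ ∈ p.2, finalClass e Δ = p.1) ∧
      ((Ls.map Prod.snd).flatten.Pairwise fun Δ Δ' => ¬ mprec e Δ Δ') ∧
      Ls.Pairwise (fun p p' => ∀ Δ ∈ p'.2, p.1 ∉ mlist e Δ.1 Δ.2) := by
  obtain ⟨c, hc⟩ := hban
  have : NeZero e := ⟨by omega⟩
  obtain ⟨Bs, hperm, hne, hfib, hdec⟩ :=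
    List.exists_perm_flatten_fiber_blocks (fun Δ => ModSegment.offset c (finalClass e Δ))
      m.toList
  have hc_flat (Δ) (hΔ : Δ ∈ (Bs.map Prod.snd).flatten) : c ∉ mlist e Δ.1 Δ.2 :=
    hc Δ (Multiset.mem_toList.mp (hperm.subset hΔ))
  have hlabel (p) (hp : p ∈ Bs) (Δ) (hΔ : Δ ∈ p.2) : finalClass e Δ = c + (p.1 : ZMod e) := by
    rw [← hfib p hp Δ hΔ, ModSegment.natCast_offset, add_sub_cancel]
  have hsnd : (Bs.map fun p => (c + (p.1 : ZMod e), p.2)).map Prod.snd = Bs.map Prod.snd := by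
    rw [List.map_map]
    rfl
  refine ⟨Bs.map fun p => (c + (p.1 : ZMod e), p.2), ?_, ?_, ?_, ?_, ?_⟩
  · rw [hsnd, ← Multiset.coe_toList m]
    exact Multiset.coe_eq_coe.mpr hperm
  · exact List.forall_mem_map.mpr hne
  · exact List.forall_mem_map.mpr hlabel
  · rw [hsnd]
    exact (List.pairwise_flatten_of_fiber_blocks hfib hdec).imp_of_mem fun hΔ hΔ' hle =>
      ModSegment.not_mprec_of_offset_finalClass_le c (hc_flat _ hΔ) (hc_flat _ hΔ') hle
  · rw [List.pairwise_map]
    refine hdec.imp_of_mem fun {p q} hp hq hlt Δ hΔ hmem => ?_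
    obtain ⟨Δ₀, hΔ₀⟩ := List.exists_mem_of_ne_nil _ (hne p hp)
    rw [← hlabel p hp Δ₀ hΔ₀] at hmem
    have hle := ModSegment.offset_le_offset_finalClass c
      (hc_flat Δ (List.mem_flatten_of_mem (List.mem_map_of_mem hq) hΔ)) hmem
    rw [hfib p hp Δ₀ hΔ₀, hfib q hq Δ hΔ] at hle
    exact hlt.not_ge hle

/-- Every nonempty banal finite multiset of mod-`e` segments
admits an enumeration partitioned into consecutive blocks, each block carrying
a common final class `c_k`, such that no earlier segment precedes a later one,
and for `k < k'` the class `c_k` lies in the support of no segment of the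
block `I_{k'}` (the arrangement (5.1)–(5.3) of the paper). Each block is
recorded as a pair `(c_k, I_k)`. -/
theorem exists_arranged_blocks (e : ℕ) (he : 1 ≤ e) (m : Multiset (ZMod e × ℕ))
    (hm : m ≠ 0) (hpos : ∀ Δ ∈ m, 1 ≤ Δ.2)
    (hban : ∃ c : ZMod e, ∀ Δ ∈ m, c ∉ mlist e Δ.1 Δ.2) :
    ∃ Ls : List (ZMod e × List (ZMod e × ℕ)),
      (((Ls.map Prod.snd).flatten : List (ZMod e × ℕ)) : Multiset (ZMod e × ℕ)) = m ∧
      (∀ p ∈ Ls, p.2 ≠ []) ∧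
      (∀ p ∈ Ls, ∀ Δ ∈ p.2, finalClass e Δ = p.1) ∧
      ((Ls.map Prod.snd).flatten.Pairwise fun Δ Δ' => ¬ mprec e Δ Δ') ∧
      Ls.Pairwise (fun p p' => ∀ Δ ∈ p'.2, p.1 ∉ mlist e Δ.1 Δ.2) :=
  exists_arranged_blocks_general e he m hban
end

section
/- Let (Δ_1, …, Δ_r) be a finite sequence of Z-segments, write Δ_k = (a_k, b_k), and let i be an index such that Δ_i precedes Δ_{i+1} and a_{i+1} ≤ b_i. Then the sequence obtained by replacing the pair (Δ_i, Δ_{i+1}) by the pair ((a_{i+1}, b_i), (a_i, b_{i+1})) (the intersection followed by the union) has strictly fewer inversions than (Δ_1, …, Δ_r). (This is the second half of the inversion-decreasing step used in §5.7 of the paper, following Zelevinsky's Lemma 6.7.) -/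
/-!
Write the sequence as `l₁ ++ A :: B :: l₂`. Inversions inside `l₁`, inside `l₂` and between
them are untouched by the replacement. The pair `(A, B)` is an inversion, while the new pair
`(A ∩ B, A ∪ B)` is not, because the union starts strictly before the intersection. Finally,
for every other segment `C`, on either side of the pair, `C` forms at most as many inversions
with `{A ∩ B, A ∪ B}` as with `{A, B}`; this is a case check on the endpoints.
-/

/-- A Z-segment `(a, b)` precedes `(a', b')` if `a < a'`, `a' ≤ b + 1` and
`b < b'`. -/
def zprec (Δ Δ' : ℤ × ℤ) : Prop := Δ.1 < Δ'.1 ∧ Δ'.1 ≤ Δ.2 + 1 ∧ Δ.2 < Δ'.2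

instance : ∀ Δ Δ' : ℤ × ℤ, Decidable (zprec Δ Δ') := fun _ _ => by
  unfold zprec; infer_instance

/-- The number of inversions of a finite sequence of Z-segments : pairs of
indices `i < j` such that the `i`-th segment precedes the `j`-th one. -/
def invCount (L : List (ℤ × ℤ)) : ℕ :=
  (Finset.univ.filter fun p : Fin L.length × Fin L.length =>
      p.1 < p.2 ∧ zprec (L.get p.1) (L.get p.2)).card

theorem List.sum_fin_length_cons {α M : Type*} [AddCommMonoid M] (a : α) (l : List α)
    (f : Fin (a :: l).length → M) : ∑ k, f k = f 0 + ∑ k : Fin l.length, f k.succ :=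
  Fin.sum_univ_succ f

theorem List.countP_eq_sum_fin {α : Type*} (p : α → Bool) (l : List α) :
    l.countP p = ∑ k : Fin l.length, if p l[k] then 1 else 0 := by
  induction l with
  | nil => simp
  | cons a l ih => rw [List.countP_cons, ih, add_comm, List.sum_fin_length_cons]; rfl

theorem List.countP_add_countP_le_of_forall {α : Type*} {p q p' q' : α → Prop}
    [DecidablePred p] [DecidablePred q] [DecidablePred p'] [DecidablePred q'] (l : List α)
    (h : ∀ c ∈ l, (if p' c then 1 else 0) + (if q' c then 1 else 0) ≤
      (if p c then 1 else 0) + (if q c then 1 else 0)) :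
    l.countP (p' ·) + l.countP (q' ·) ≤ l.countP (p ·) + l.countP (q ·) := by
  induction l with
  | nil => simp
  | cons a l ih =>
    have ha := h a List.mem_cons_self
    have hl := ih fun c hc => h c (List.mem_cons_of_mem a hc)
    simp only [List.countP_cons, decide_eq_true_eq]
    omega

theorem List.set_set_succ_eq {α : Type*} (L : List α) {i : ℕ} (hi : i + 1 < L.length)
    (x y : α) : (L.set i x).set (i + 1) y = L.take i ++ x :: y :: L.drop (i + 2) := by
  apply List.ext_getElem
  · simp only [List.length_set, List.length_append, List.length_take, List.length_cons,
      List.length_drop]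
    omega
  · intro n _ _
    simp only [List.getElem_set, List.getElem_append, List.getElem_cons]
    grind

theorem invCount_eq_sum (L : List (ℤ × ℤ)) :
    invCount L = ∑ j : Fin L.length, ∑ k : Fin L.length,
      if j < k ∧ zprec L[j] L[k] then 1 else 0 := by
  rw [invCount, Finset.card_filter, Fintype.sum_prod_type]
  rfl

theorem invCount_cons (a : ℤ × ℤ) (l : List (ℤ × ℤ)) :
    invCount (a :: l) = l.countP (zprec a ·) + invCount l := by
  simp only [invCount_eq_sum, List.countP_eq_sum_fin, List.sum_fin_length_cons,
    Fin.succ_lt_succ_iff, Fin.not_lt_zero, Fin.succ_pos, true_and, false_and, if_false, zero_add,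
    decide_eq_true_eq]
  rfl

theorem invCount_append_cons_cons_lt (l₁ l₂ : List (ℤ × ℤ)) {A B X Y : ℤ × ℤ}
    (hleft : ∀ C, (if zprec C X then 1 else 0) + (if zprec C Y then 1 else 0) ≤
      (if zprec C A then 1 else 0) + (if zprec C B then 1 else 0))
    (hright : ∀ C, (if zprec X C then 1 else 0) + (if zprec Y C then 1 else 0) ≤
      (if zprec A C then 1 else 0) + (if zprec B C then 1 else 0))
    (hXY : ¬ zprec X Y) (hAB : zprec A B) :
    invCount (l₁ ++ X :: Y :: l₂) < invCount (l₁ ++ A :: B :: l₂) := by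
  induction l₁ with
  | nil =>
    have h₂ := l₂.countP_add_countP_le_of_forall fun C _ => hright C
    simp only [List.nil_append, invCount_cons, List.countP_cons, decide_eq_true_eq, if_neg hXY,
      if_pos hAB]
    omega
  | cons C l₁ ih =>
    have hC := hleft C
    simp only [List.cons_append, invCount_cons, List.countP_append, List.countP_cons,
      decide_eq_true_eq] at ih ⊢
    omega

section InterUnion

variable {A B : ℤ × ℤ} (hAB : zprec A B)
include hAB

theorem zprec_inter_union_left (C : ℤ × ℤ) :
    (if zprec C (B.1, A.2) then 1 else 0) + (if zprec C (A.1, B.2) then 1 else 0) ≤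
      (if zprec C A then 1 else 0) + (if zprec C B then 1 else 0) := by
  split_ifs <;> simp only [zprec] at * <;> omega

theorem zprec_inter_union_right (C : ℤ × ℤ) :
    (if zprec (B.1, A.2) C then 1 else 0) + (if zprec (A.1, B.2) C then 1 else 0) ≤
      (if zprec A C then 1 else 0) + (if zprec B C then 1 else 0) := by
  split_ifs <;> simp only [zprec] at * <;> omega

theorem not_zprec_inter_union : ¬ zprec (B.1, A.2) (A.1, B.2) := by
  simp only [zprec] at *
  omega

end InterUnion

/-- If `Δ_i = (a_i, b_i)` precedes `Δ_{i+1} = (a_{i+1}, b_{i+1})`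
and `a_{i+1} ≤ b_i`, then replacing `(Δ_i, Δ_{i+1})` by the pair
`((a_{i+1}, b_i), (a_i, b_{i+1}))` (intersection followed by union) strictly
decreases the number of inversions. -/
theorem invCount_intersect_union (L : List (ℤ × ℤ))
    (i : ℕ) (hi : i + 1 < L.length)
    (h : zprec (L.get ⟨i, by omega⟩) (L.get ⟨i + 1, hi⟩)) :
    invCount ((L.set i ((L.get ⟨i + 1, hi⟩).1, (L.get ⟨i, by omega⟩).2)).set (i + 1)
        ((L.get ⟨i, by omega⟩).1, (L.get ⟨i + 1, hi⟩).2))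
      < invCount L := by
  have hL : L = L.take i ++ L[i] :: L[i + 1] :: L.drop (i + 2) := by simp
  rw [L.set_set_succ_eq hi]
  conv_rhs => rw [hL]
  exact invCount_append_cons_cons_lt _ _ (zprec_inter_union_left h) (zprec_inter_union_right h)
    (not_zprec_inter_union h) h
end
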